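/- Let M ∈ GL((F_{2^m})^b) be F_{2^m}-linear of order t, and let α : (F_2)^{mb} → (F_2)^{2^m b t} be defined by α(v) = (ε(v), ε(Mv), …, ε(M^{t−1}v)). Then the F_2-dimension of the span of the image of α is at most 2^m b t − (bt − 1) − mb(t − 1). -/

import Mathlib

/-!
Each block `j ↦ α v (s, i, j)` is the indicator vector of `ι ((M ^ s) v i)`: it has coordinate
sum `1`, and weighting `ι⁻¹ j` by its entries and summing recovers `(M ^ s) v i`. Hence the span
of `α` satisfies `b t - 1` linear relations (all block sums agree) and `m b (t - 1)` more (block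
`s` decodes to `M ^ s` applied to the decoding of block `0`). The map collecting these relations
is surjective, so its kernel, which contains the span, has exactly the stated dimension.
-/

open Finset Module

namespace IndicatorCode

variable {K F J T B : Type*} [Field K] [AddCommGroup F] [Module K F]
  [Fintype J] [DecidableEq J]

def codeword (ι : F ≃ J) (L : T → Module.End K (B → F)) (v : B → F) : T × B × J → K :=
  fun x => (Pi.single (ι (L x.1 v x.2.1)) 1 : J → K) x.2.2

abbrev decode (ι : F ≃ J) : (J → K) →ₗ[K] F := Fintype.linearCombination K ι.symm

def constraintMap (ι : F ≃ J) (L : T → Module.End K (B → F)) (s₀ : T) (i₀ : B) :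
    (T × B × J → K) →ₗ[K]
      ({p : T × B // p ≠ (s₀, i₀)} → K) × ({s : T // s ≠ s₀} → B → F) where
  toFun x :=
    (fun p => ∑ j, x (p.1.1, p.1.2, j) - ∑ j, x (s₀, i₀, j),
     fun s i => decode ι (fun j => x (s, i, j)) -
       L s (fun i' => decode ι (fun j => x (s₀, i', j))) i)
  map_add' x y := by
    ext <;> simp [sum_add_distrib, ← Pi.add_def] <;> abel
  map_smul' c x := by
    ext
    · simp [mul_sum, mul_sub]
    · have hblock : ∀ s i, (fun j => c * x (s, i, j)) = c • fun j => x (s, i, j) :=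
        fun _ _ => rfl
      have hdecode : (fun i' => c • decode ι (fun j => x (s₀, i', j))) =
          c • fun i' => decode ι (fun j => x (s₀, i', j)) := rfl
      simp only [Pi.smul_apply, smul_eq_mul, RingHom.id_apply, Prod.smul_mk, smul_sub, hblock,
        map_smul, hdecode]

variable (ι : F ≃ J) (L : T → Module.End K (B → F)) (s₀ : T) (i₀ : B)

lemma constraintMap_codeword (hL : L s₀ = 1) (v : B → F) :
    constraintMap ι L s₀ i₀ (codeword ι L v) = 0 := by
  have hblock : ∀ s i, (fun j => codeword ι L v (s, i, j)) = Pi.single (ι (L s v i)) 1 :=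
    fun _ _ => rfl
  ext <;> simp [constraintMap, hblock, hL]

lemma constraintMap_surjective [DecidableEq T] [DecidableEq B] :
    Function.Surjective (constraintMap ι L s₀ i₀) := by
  rintro ⟨a, c⟩
  let a' : T × B → K := fun p => if h : p = (s₀, i₀) then 0 else a ⟨p, h⟩
  let c' : T → B → F := fun s => if h : s = s₀ then 0 else c ⟨s, h⟩
  -- `e` has sum `1` and decodes to `0`, so it corrects the block sums without disturbing decoding.
  let e : J → K := Pi.single (ι 0) 1
  let x : T × B × J → K := fun p =>
    (a' (p.1, p.2.1) • e + (Pi.single (ι (c' p.1 p.2.1)) 1 - e) : J → K) p.2.2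
  have hblock : ∀ s i,
      (fun j => x (s, i, j)) = a' (s, i) • e + (Pi.single (ι (c' s i)) 1 - e) := fun _ _ => rfl
  have hweight : ∀ s i, ∑ j, x (s, i, j) = a' (s, i) := by
    intro s i
    simp [x, e, sum_add_distrib, ← mul_sum]
  have hdecode : ∀ s i, decode ι (fun j => x (s, i, j)) = c' s i := by
    intro s i
    simp [hblock, e]
  refine ⟨x, Prod.ext (funext fun p => ?_) (funext fun s => funext fun i => ?_)⟩
  · simp [constraintMap, hweight, a', p.2]
  · have hbase : (fun i' => decode ι (fun j => x (s₀, i', j))) = 0 := by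
      funext i'
      simp [hdecode, c']
    simp only [constraintMap, LinearMap.coe_mk, AddHom.coe_mk]
    rw [hbase, map_zero, Pi.zero_apply, sub_zero, hdecode]
    simp [c', s.2]

variable [Fintype T] [DecidableEq T] [Fintype B] [DecidableEq B] [FiniteDimensional K F]

lemma finrank_constraintSpace :
    finrank K (({p : T × B // p ≠ (s₀, i₀)} → K) × ({s : T // s ≠ s₀} → B → F)) =
      (Fintype.card T * Fintype.card B - 1) +
        (Fintype.card T - 1) * Fintype.card B * finrank K F := by
  simp [finrank_prod, finrank_pi_fintype, Fintype.card_subtype_compl, mul_assoc]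

theorem finrank_span_range_codeword_add_le [Nonempty B] (hL : L s₀ = 1) :
    finrank K (Submodule.span K (Set.range (codeword ι L))) +
        ((Fintype.card T * Fintype.card B - 1) +
          (Fintype.card T - 1) * Fintype.card B * finrank K F) ≤
      Fintype.card T * Fintype.card B * Fintype.card J := by
  obtain ⟨i₀⟩ := ‹Nonempty B›
  have hspan : Submodule.span K (Set.range (codeword ι L)) ≤
      LinearMap.ker (constraintMap ι L s₀ i₀) :=
    Submodule.span_le.mpr (Set.range_subset_iff.mpr (constraintMap_codeword ι L s₀ i₀ hL))
  have hrank := (constraintMap ι L s₀ i₀).finrank_range_add_finrank_ker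
  rw [LinearMap.range_eq_top.mpr (constraintMap_surjective ι L s₀ i₀), finrank_top,
    finrank_constraintSpace, finrank_fintype_fun_eq_card] at hrank
  have hle := Submodule.finrank_mono hspan
  rw [Fintype.card_prod, Fintype.card_prod, ← mul_assoc] at hrank
  omega

end IndicatorCode

open IndicatorCode in
theorem stmt8_general (m b t : ℕ) (hm : 1 ≤ m) (hb : 1 ≤ b) (ht : 1 ≤ t)
    (ι : GaloisField 2 m ≃ Fin (2 ^ m))
    (ε : (Fin b → GaloisField 2 m) → (Fin b × Fin (2 ^ m) → ZMod 2))
    (hε : ∀ v i j, ε v (i, j) = if j = ι (v i) then 1 else 0)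
    (M : (Fin b → GaloisField 2 m) ≃ₗ[GaloisField 2 m] (Fin b → GaloisField 2 m))
    (α : (Fin b → GaloisField 2 m) → (Fin t × Fin b × Fin (2 ^ m) → ZMod 2))
    (hα : ∀ v (s : Fin t) (i : Fin b) (j : Fin (2 ^ m)),
      α v (s, i, j) = ε ((M ^ (s : ℕ)) v) (i, j)) :
    Module.finrank (ZMod 2) (Submodule.span (ZMod 2) (Set.range α))
      ≤ 2 ^ m * b * t - (b * t - 1) - m * b * (t - 1) := by
  let L : Fin t → Module.End (ZMod 2) (Fin b → GaloisField 2 m) := fun s =>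
    (M ^ (s : ℕ)).toLinearMap.restrictScalars (ZMod 2)
  have hα_eq : α = codeword ι L := by
    ext v ⟨s, i, j⟩
    simp [hα, hε, codeword, L, Pi.single_apply]
  have : Nonempty (Fin b) := ⟨⟨0, hb⟩⟩
  have hbound := finrank_span_range_codeword_add_le ι L ⟨0, ht⟩ (by ext; simp [L])
  rw [← hα_eq, GaloisField.finrank 2 (by omega : m ≠ 0)] at hbound
  simp only [Fintype.card_fin] at hbound
  ring_nf at hbound ⊢
  omega

theorem stmt8 (m b t : ℕ) (hm : 1 ≤ m) (hb : 1 ≤ b) (ht : 1 ≤ t)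
    (ι : GaloisField 2 m ≃ Fin (2 ^ m))
    (ε : (Fin b → GaloisField 2 m) → (Fin b × Fin (2 ^ m) → ZMod 2))
    (hε : ∀ v i j, ε v (i, j) = if j = ι (v i) then 1 else 0)
    (M : (Fin b → GaloisField 2 m) ≃ₗ[GaloisField 2 m] (Fin b → GaloisField 2 m))
    (hM : orderOf M = t)
    (α : (Fin b → GaloisField 2 m) → (Fin t × Fin b × Fin (2 ^ m) → ZMod 2))
    (hα : ∀ v (s : Fin t) (i : Fin b) (j : Fin (2 ^ m)),
      α v (s, i, j) = ε ((M ^ (s : ℕ)) v) (i, j)) :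
    Module.finrank (ZMod 2) (Submodule.span (ZMod 2) (Set.range α))
      ≤ 2 ^ m * b * t - (b * t - 1) - m * b * (t - 1) :=
  stmt8_general m b t hm hb ht ι ε hε M α hα
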